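/- Let R > 0, r ∈ (0, R/2], γ ∈ (0, 1/r], and let Φ : [0,R] → ℝ be a nondecreasing function with Φ(0) = 1. Suppose there is a set Y_0 ⊆ [0,R−r] of Lebesgue measure zero such that for all t ∈ [0,R−r] \ Y_0, Φ(t+r) ≥ Φ(t) + γ·∫_0^t Φ(x) dx. Then, setting η = √(γ/((e−1)·r)), for all t ∈ [0,R] we have Φ(t) ≥ max(e^{η·t − 1}, 1); in particular Φ(R) ≥ e^{η·R − 1}. -/

import Mathlib

/-!
Compare `Φ` with `g x = max (exp (η x - 1)) 1`. The choice of `η` makes `g` a subsolution of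
the delay inequality, `g (s + r) ≤ g s + γ ∫₀ˢ g`: this reduces to the convexity bound
`exp x ≤ 1 + (e - 1) x` on `[0, 1]`, applied to `η (s + r) - 1` while `η s ≤ 1` and to
`η r` afterwards. Since `g = 1 ≤ Φ` on `[0, r]`, induction over the intervals `[0, n r]`
propagates `g ≤ Φ`; the exceptional set `Y₀` is harmless because `s ↦ g s + γ ∫₀ˢ g` is
continuous and the complement of a null set is dense.
-/

open MeasureTheory Real Set

lemma exp_le_one_add_mul_of_mem_Icc {x : ℝ} (hx : x ∈ Icc 0 1) :
    exp x ≤ 1 + (exp 1 - 1) * x := by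
  have h := convexOn_exp.2 (mem_univ (0 : ℝ)) (mem_univ (1 : ℝ))
    (sub_nonneg.2 hx.2) hx.1 (sub_add_cancel 1 x)
  simp only [smul_eq_mul, mul_zero, mul_one, zero_add, exp_zero] at h
  linarith

lemma le_of_forall_mem_Ioo_notMem_of_null {X : Type*} [TopologicalSpace X] [LinearOrder X]
    [OrderTopology X] [DenselyOrdered X] [MeasurableSpace X] {μ : Measure X}
    [μ.IsOpenPosMeasure] {F : X → ℝ} {Y : Set X} {a s : X} {c : ℝ} (hF : Continuous F)
    (hY : μ Y = 0) (has : a < s) (h : ∀ u ∈ Ioo a s, u ∉ Y → F u ≤ c) : F s ≤ c := by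
  have hdense : Dense Yᶜ := Measure.dense_of_ae (measure_eq_zero_iff_ae_notMem.1 hY)
  have hs : s ∈ closure (Ioo a s ∩ Yᶜ) :=
    closure_minimal (hdense.open_subset_closure_inter isOpen_Ioo) isClosed_closure
      (by simpa [closure_Ioo has.ne] using has.le)
  exact closure_minimal (fun u hu => h u hu.1 hu.2) (isClosed_le hF continuous_const) hs

section Comparison

variable {R r γ : ℝ} {Φ g : ℝ → ℝ} {Y : Set ℝ}

lemma add_mul_integral_le_of_le_on_Icc (hr : 0 ≤ r) (hγ : 0 ≤ γ) (hg : Continuous g)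
    (hmono : MonotoneOn Φ (Icc 0 R)) (hY : volume Y = 0)
    (hineq : ∀ t ∈ Icc 0 (R - r) \ Y, Φ t + γ * ∫ x in (0 : ℝ)..t, Φ x ≤ Φ (t + r))
    {s : ℝ} (hs : s ∈ Ioc 0 (R - r)) (hle : ∀ x ∈ Icc 0 s, g x ≤ Φ x) :
    g s + γ * ∫ x in (0 : ℝ)..s, g x ≤ Φ (s + r) := by
  have hF : Continuous fun u => g u + γ * ∫ x in (0 : ℝ)..u, g x :=
    hg.add <| continuous_const.mul <|
      intervalIntegral.continuous_primitive (fun _ _ => hg.intervalIntegrable _ _) 0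
  refine le_of_forall_mem_Ioo_notMem_of_null
    (F := fun u => g u + γ * ∫ x in (0 : ℝ)..u, g x) hF hY hs.1 fun u hu huY => ?_
  have hu' : u ∈ Icc 0 (R - r) := ⟨hu.1.le, hu.2.le.trans hs.2⟩
  have hΦint : IntervalIntegrable Φ volume 0 u := by
    refine (hmono.mono ?_).intervalIntegrable
    rw [uIcc_of_le hu'.1]
    exact Icc_subset_Icc le_rfl (by linarith [hu'.2])
  have hgu : ∀ x ∈ Icc 0 u, g x ≤ Φ x := fun x hx => hle x ⟨hx.1, hx.2.trans hu.2.le⟩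
  calc g u + γ * ∫ x in (0 : ℝ)..u, g x ≤ Φ u + γ * ∫ x in (0 : ℝ)..u, Φ x := by
        gcongr
        · exact hgu u ⟨hu'.1, le_rfl⟩
        · exact intervalIntegral.integral_mono_on hu'.1 (hg.intervalIntegrable _ _) hΦint hgu
    _ ≤ Φ (u + r) := hineq u ⟨hu', huY⟩
    _ ≤ Φ (s + r) :=
        hmono ⟨by linarith [hu'.1], by linarith [hu'.2]⟩
          ⟨by linarith [hs.1], by linarith [hs.2]⟩ (by linarith [hu.2])

theorem le_on_Icc_of_delay_integral_ineq (hr : 0 < r) (hγ : 0 ≤ γ) (hg : Continuous g)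
    (hmono : MonotoneOn Φ (Icc 0 R)) (hY : volume Y = 0)
    (hineq : ∀ t ∈ Icc 0 (R - r) \ Y, Φ t + γ * ∫ x in (0 : ℝ)..t, Φ x ≤ Φ (t + r))
    (hbase : ∀ t ∈ Icc 0 R, t ≤ r → g t ≤ Φ t)
    (hsub : ∀ s ∈ Ioc 0 (R - r), g (s + r) ≤ g s + γ * ∫ x in (0 : ℝ)..s, g x) :
    ∀ t ∈ Icc 0 R, g t ≤ Φ t := by
  suffices h : ∀ n : ℕ, ∀ t ∈ Icc 0 R, t ≤ (n + 1) * r → g t ≤ Φ t by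
    intro t ht
    obtain ⟨n, hn⟩ := exists_nat_ge (t / r)
    refine h n t ht ?_
    rw [div_le_iff₀ hr] at hn
    linarith
  intro n
  induction n with
  | zero => simpa using hbase
  | succ n ih =>
    intro t ht htn
    rcases le_or_gt t r with htr | hrt
    · exact hbase t ht htr
    obtain ⟨s, rfl⟩ : ∃ s, t = s + r := ⟨t - r, by ring⟩
    have hs : s ∈ Ioc 0 (R - r) := ⟨by linarith, by linarith [ht.2]⟩
    refine (hsub s hs).trans (add_mul_integral_le_of_le_on_Icc hr.le hγ hg hmono hY hineq hs ?_)
    intro x hx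
    refine ih x ⟨hx.1, by linarith [hx.2, hs.2]⟩ ?_
    push_cast at htn
    linarith [hx.2]

end Comparison

noncomputable def clampedExp (η x : ℝ) : ℝ := max (exp (η * x - 1)) 1

section ClampedExp

variable {η : ℝ}

lemma continuous_clampedExp (η : ℝ) : Continuous (clampedExp η) := by
  unfold clampedExp
  fun_prop

lemma one_le_clampedExp (η x : ℝ) : 1 ≤ clampedExp η x := le_max_right _ _

lemma exp_le_clampedExp (η x : ℝ) : exp (η * x - 1) ≤ clampedExp η x := le_max_left _ _

lemma clampedExp_eq_one {x : ℝ} (hx : η * x ≤ 1) : clampedExp η x = 1 :=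
  max_eq_right (exp_le_one_iff.2 (by linarith))

lemma le_integral_clampedExp {s : ℝ} (hs : 0 ≤ s) :
    s ≤ ∫ x in (0 : ℝ)..s, clampedExp η x := by
  calc s = ∫ _ in (0 : ℝ)..s, (1 : ℝ) := by simp
    _ ≤ _ := intervalIntegral.integral_mono_on hs intervalIntegrable_const
        ((continuous_clampedExp η).intervalIntegrable _ _) fun x _ => one_le_clampedExp η x

lemma integral_exp_mul_sub_one (hη : η ≠ 0) (a b : ℝ) :
    ∫ x in a..b, exp (η * x - 1) = (exp (η * b - 1) - exp (η * a - 1)) / η := by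
  rw [intervalIntegral.integral_comp_mul_sub (fun x => exp x) hη, integral_exp, smul_eq_mul]
  ring

lemma exp_div_le_integral_clampedExp (hη : 0 < η) {s : ℝ} (hs : 1 ≤ η * s) :
    exp (η * s - 1) / η ≤ ∫ x in (0 : ℝ)..s, clampedExp η x := by
  have hint := fun a b => (continuous_clampedExp η).intervalIntegrable (μ := volume) a b
  have hs' : η⁻¹ ≤ s := by rw [inv_le_iff_one_le_mul₀' hη]; exact hs
  have hhead : η⁻¹ ≤ ∫ x in (0 : ℝ)..η⁻¹, clampedExp η x :=
    le_integral_clampedExp (inv_nonneg.2 hη.le)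
  have htail : (exp (η * s - 1) - 1) / η ≤ ∫ x in η⁻¹..s, clampedExp η x := by
    calc (exp (η * s - 1) - 1) / η = ∫ x in η⁻¹..s, exp (η * x - 1) := by
          rw [integral_exp_mul_sub_one hη.ne', mul_inv_cancel₀ hη.ne', sub_self, exp_zero]
      _ ≤ _ := intervalIntegral.integral_mono_on hs'
          ((by fun_prop : Continuous fun x => exp (η * x - 1)).intervalIntegrable _ _) (hint _ _)
          fun x _ => exp_le_clampedExp η x
  rw [← intervalIntegral.integral_add_adjacent_intervals (hint 0 η⁻¹) (hint η⁻¹ s)]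
  calc exp (η * s - 1) / η = η⁻¹ + (exp (η * s - 1) - 1) / η := by field_simp; ring
    _ ≤ _ := add_le_add hhead htail

lemma clampedExp_add_le (hη : 0 < η) {r s : ℝ} (hr : 0 ≤ r) (hηr : η * r ≤ 1)
    (hs : 0 ≤ s) :
    clampedExp η (s + r) ≤
      clampedExp η s + (exp 1 - 1) * r * η ^ 2 * ∫ x in (0 : ℝ)..s, clampedExp η x := by
  have he : 0 ≤ exp 1 - 1 := by linarith [add_one_le_exp (1 : ℝ)]
  have hint : 0 ≤ ∫ x in (0 : ℝ)..s, clampedExp η x := (le_integral_clampedExp hs).trans' hs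
  have hterm : 0 ≤ (exp 1 - 1) * r * η ^ 2 * ∫ x in (0 : ℝ)..s, clampedExp η x := by
    positivity
  refine max_le ?_ (by linarith [one_le_clampedExp η s])
  rcases le_or_gt (η * s) 1 with hηs | hηs
  · rcases le_or_gt (η * (s + r)) 1 with hηt | hηt
    · linarith [exp_le_one_iff.2 (by linarith : η * (s + r) - 1 ≤ 0), one_le_clampedExp η s]
    -- `(1 - η r) (1 - η s) ≥ 0` bounds the exponent by `η r · η s`
    have hexp : η * (s + r) - 1 ≤ (η * r) * (η * s) := by
      nlinarith [mul_nonneg (sub_nonneg.2 hηr) (sub_nonneg.2 hηs)]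
    calc exp (η * (s + r) - 1) ≤ 1 + (exp 1 - 1) * (η * (s + r) - 1) :=
          exp_le_one_add_mul_of_mem_Icc ⟨by linarith, by nlinarith [mul_nonneg hη.le hr]⟩
      _ ≤ 1 + (exp 1 - 1) * r * η ^ 2 * s := by nlinarith
      _ ≤ _ := by
          gcongr
          exacts [one_le_clampedExp η s, le_integral_clampedExp hs]
  · calc exp (η * (s + r) - 1) = exp (η * s - 1) * exp (η * r) := by rw [← exp_add]; ring_nf
      _ ≤ exp (η * s - 1) * (1 + (exp 1 - 1) * (η * r)) := by
          gcongr
          exact exp_le_one_add_mul_of_mem_Icc ⟨by positivity, hηr⟩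
      _ = exp (η * s - 1) + (exp 1 - 1) * r * η ^ 2 * (exp (η * s - 1) / η) := by
          field_simp
      _ ≤ _ := by
          gcongr
          exacts [exp_le_clampedExp η s, exp_div_le_integral_clampedExp hη hηs.le]

end ClampedExp

theorem stmt10_general (R r γ : ℝ) (hR : 0 < R) (hr : r ∈ Set.Ioc 0 (R / 2))
    (hγ : γ ∈ Set.Ioc 0 (1 / r))
    (Φ : ℝ → ℝ) (hmono : MonotoneOn Φ (Set.Icc 0 R)) (h0 : Φ 0 = 1)
    (Y0 : Set ℝ) (hY0 : MeasureTheory.volume Y0 = 0)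
    (hineq : ∀ t ∈ Set.Icc 0 (R - r) \ Y0,
      Φ t + γ * ∫ x in (0 : ℝ)..t, Φ x ≤ Φ (t + r)) :
    (∀ t ∈ Set.Icc 0 R,
        max (Real.exp (Real.sqrt (γ / ((Real.exp 1 - 1) * r)) * t - 1)) 1 ≤ Φ t) ∧
      Real.exp (Real.sqrt (γ / ((Real.exp 1 - 1) * r)) * R - 1) ≤ Φ R := by
  obtain ⟨hr0, -⟩ := hr
  obtain ⟨hγ0, hγr⟩ := hγ
  have he : 1 < exp 1 - 1 := by linarith [exp_one_gt_d9]
  set η := √(γ / ((exp 1 - 1) * r))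
  have hη : 0 < η := sqrt_pos.2 (by positivity)
  have hγη : γ = (exp 1 - 1) * r * η ^ 2 := by
    rw [sq_sqrt (by positivity)]
    field_simp
  have hηr : η * r ≤ 1 := by
    have : (exp 1 - 1) * (η * r) ^ 2 ≤ 1 := by
      rw [le_div_iff₀ hr0, hγη] at hγr
      nlinarith
    nlinarith [mul_pos hη hr0]
  have hΦ : ∀ t ∈ Icc 0 R, 1 ≤ Φ t := fun t ht => h0 ▸ hmono ⟨le_rfl, hR.le⟩ ht ht.1
  have main : ∀ t ∈ Icc 0 R, clampedExp η t ≤ Φ t := by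
    refine le_on_Icc_of_delay_integral_ineq hr0 hγ0.le (continuous_clampedExp η) hmono hY0
      hineq (fun t ht htr => ?_) (fun s hs => hγη ▸ clampedExp_add_le hη hr0.le hηr hs.1.le)
    rw [clampedExp_eq_one (by nlinarith [ht.1])]
    exact hΦ t ht
  exact ⟨main, (le_max_left _ _).trans (main R ⟨hR.le, le_rfl⟩)⟩

/-- Let `R > 0`, `r ∈ (0,R/2]`, `γ ∈ (0,1/r]`, and let `Φ : [0,R] → ℝ`
be nondecreasing with `Φ(0) = 1`. Suppose there is a measure-zero set `Y₀ ⊆ [0,R−r]`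
such that for all `t ∈ [0,R−r] \ Y₀`, `Φ(t+r) ≥ Φ(t) + γ ∫_0^t Φ(x) dx`.
Then, with `η = √(γ/((e−1)r))`, for all `t ∈ [0,R]` we have
`Φ(t) ≥ max(e^{η t − 1}, 1)`; in particular `Φ(R) ≥ e^{η R − 1}`. -/
theorem stmt10 (R r γ : ℝ) (hR : 0 < R) (hr : r ∈ Set.Ioc 0 (R / 2))
    (hγ : γ ∈ Set.Ioc 0 (1 / r))
    (Φ : ℝ → ℝ) (hmono : MonotoneOn Φ (Set.Icc 0 R)) (h0 : Φ 0 = 1)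
    (Y0 : Set ℝ) (hY0sub : Y0 ⊆ Set.Icc 0 (R - r)) (hY0 : MeasureTheory.volume Y0 = 0)
    (hineq : ∀ t ∈ Set.Icc 0 (R - r) \ Y0,
      Φ t + γ * ∫ x in (0 : ℝ)..t, Φ x ≤ Φ (t + r)) :
    (∀ t ∈ Set.Icc 0 R,
        max (Real.exp (Real.sqrt (γ / ((Real.exp 1 - 1) * r)) * t - 1)) 1 ≤ Φ t) ∧
      Real.exp (Real.sqrt (γ / ((Real.exp 1 - 1) * r)) * R - 1) ≤ Φ R :=
  stmt10_general R r γ hR hr hγ Φ hmono h0 Y0 hY0 hineq
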